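/- For fixed μ₁, μ₂ ∈ ℂ, the operators E₁₁ʳ = −t d/dt − (1/2 − μ₁), E₁₂ʳ = d/dt, E₂₁ʳ = −t² d/dt + (−1+μ₁−μ₂)t, E₂₂ʳ = t d/dt + (1/2 + μ₂), acting on smooth ℂ-valued functions of a real variable t, satisfy the gl(2) commutation relations [E_{ij}, E_{kl}] = δ_{jk}E_{il} − δ_{li}E_{kj}. -/

import Mathlib

/-- Operators on smooth ℂ-valued functions of a real variable. -/
abbrev OpC := (ℝ → ℂ) → (ℝ → ℂ)

/-- The operators `E₁₁ʳ = −t d/dt − (1/2 − μ₁)`, `E₁₂ʳ = d/dt`,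
`E₂₁ʳ = −t² d/dt + (−1+μ₁−μ₂)t`, `E₂₂ʳ = t d/dt + (1/2 + μ₂)`. -/
noncomputable def Er (μ₁ μ₂ : ℂ) (i j : Fin 2) : OpC :=
  ![![fun (f : ℝ → ℂ) (t : ℝ) => -((t : ℂ) * deriv f t) - (1/2 - μ₁) * f t,
     fun (f : ℝ → ℂ) (t : ℝ) => deriv f t],
    ![fun (f : ℝ → ℂ) (t : ℝ) => -((t : ℂ)^2 * deriv f t) + (-1 + μ₁ - μ₂) * (t : ℂ) * f t,
     fun (f : ℝ → ℂ) (t : ℝ) => (t : ℂ) * deriv f t + (1/2 + μ₂) * f t]] i j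

lemma hasDerivAt_coe (t : ℝ) : HasDerivAt (fun s : ℝ => (s : ℂ)) 1 t := by
  simpa using (hasDerivAt_id t).ofReal_comp

lemma derivE11 (c : ℂ) (f : ℝ → ℂ) (hf : ContDiff ℝ (⊤ : ℕ∞) f) (t : ℝ) :
    deriv (fun s : ℝ => -((s : ℂ) * deriv f s) - c * f s) t =
      -(deriv f t + t * deriv (deriv f) t) - c * deriv f t := by
  have h1 : Differentiable ℝ f := hf.differentiable (by simp)
  have h2 : Differentiable ℝ (deriv f) :=
    (contDiff_infty_iff_deriv.mp (hf.of_le (by simp))).2.differentiable (by simp)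
  have := (((hasDerivAt_coe t).mul (h2 t).hasDerivAt).neg.sub
    (((h1 t).hasDerivAt).const_mul c))
  convert this.deriv using 1; rfl; ring

lemma derivE21 (c : ℂ) (f : ℝ → ℂ) (hf : ContDiff ℝ (⊤ : ℕ∞) f) (t : ℝ) :
    deriv (fun s : ℝ => -((s : ℂ)^2 * deriv f s) + c * (s : ℂ) * f s) t =
      -(2 * t * deriv f t + t^2 * deriv (deriv f) t) + c * (f t + t * deriv f t) := by
  have h1 : Differentiable ℝ f := hf.differentiable (by simp)
  have h2 : Differentiable ℝ (deriv f) :=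
    (contDiff_infty_iff_deriv.mp (hf.of_le (by simp))).2.differentiable (by simp)
  have hsq : HasDerivAt (fun s : ℝ => (s : ℂ)^2) (2 * t) t := by
    have := (hasDerivAt_coe t).mul (hasDerivAt_coe t)
    simp only [← sq, Pi.pow_def] at this
    rw [show (2:ℂ) * t = 1 * t + t * 1 by ring]; exact this
  have := ((hsq.mul (h2 t).hasDerivAt).neg.add
    (((hasDerivAt_coe t).const_mul c).mul (h1 t).hasDerivAt))
  convert this.deriv using 1; rfl; ring

lemma derivE22 (c : ℂ) (f : ℝ → ℂ) (hf : ContDiff ℝ (⊤ : ℕ∞) f) (t : ℝ) :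
    deriv (fun s : ℝ => (s : ℂ) * deriv f s + c * f s) t =
      deriv f t + t * deriv (deriv f) t + c * deriv f t := by
  have h1 : Differentiable ℝ f := hf.differentiable (by simp)
  have h2 : Differentiable ℝ (deriv f) :=
    (contDiff_infty_iff_deriv.mp (hf.of_le (by simp))).2.differentiable (by simp)
  have := (((hasDerivAt_coe t).mul (h2 t).hasDerivAt).add
    (((h1 t).hasDerivAt).const_mul c))
  convert this.deriv using 1; rfl; ring

lemma derivE12 (f : ℝ → ℂ) (hf : ContDiff ℝ (⊤ : ℕ∞) f) (t : ℝ) :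
    deriv (fun s : ℝ => deriv f s) t = deriv (deriv f) t := rfl

/-- The operators `E_{ij}ʳ` satisfy the `gl(2)` commutation relations
`[E_{ij}, E_{kl}] = δ_{jk} E_{il} − δ_{li} E_{kj}` on smooth functions. -/
theorem Er_commutation (μ₁ μ₂ : ℂ) (i j k l : Fin 2) (f : ℝ → ℂ)
    (hf : ContDiff ℝ (⊤ : ℕ∞) f) (t : ℝ) :
    Er μ₁ μ₂ i j (Er μ₁ μ₂ k l f) t - Er μ₁ μ₂ k l (Er μ₁ μ₂ i j f) t =
      (if j = k then Er μ₁ μ₂ i l f t else 0) -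
      (if l = i then Er μ₁ μ₂ k j f t else 0) := by
  fin_cases i <;> fin_cases j <;> fin_cases k <;> fin_cases l <;>
    simp only [Er, Fin.mk_zero, Fin.mk_one, Fin.isValue, Matrix.cons_val_zero,
      Matrix.cons_val_one, Matrix.head_cons, if_true,
      show ((1:Fin 2) = 0) = False by simp, show ((0:Fin 2) = 1) = False by simp,
      if_false] <;>
    simp only [derivE11 _ f hf t, derivE21 _ f hf t, derivE22 _ f hf t,
      derivE12 f hf t] <;>
    ring
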